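/- For every matrix-sequence {A_n}_n with spectral symbol f, there exists a sequence of positive reals ε_n such that whenever ‖N_n‖ ≤ ε_n for all n (spectral norm), the perturbed sequence {A_n + N_n}_n also has spectral symbol f. -/

import Mathlib

open Filter MeasureTheory
open scoped Matrix
open Asymptotics
open scoped BigOperators

/-- The eigenvalues of a complex matrix, listed with multiplicity (in some fixed order). -/
noncomputable def eigs {n : ℕ} (A : Matrix (Fin n) (Fin n) ℂ) : Fin n → ℂ :=
  fun i => (Matrix.charpoly A).roots.toList.getD i 0

/-- Optimal matching distance between two `n`-tuples of complex numbers. -/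
noncomputable def matchDist {n : ℕ} (v w : Fin n → ℂ) : ℝ :=
  ⨅ σ : Equiv.Perm (Fin n), ⨆ i, ‖v i - w (σ i)‖

/-- Spectral norm (largest singular value) of a matrix. -/
noncomputable def specNorm {n : ℕ} (A : Matrix (Fin n) (Fin n) ℂ) : ℝ :=
  ‖Matrix.toEuclideanCLM (𝕜 := ℂ) A‖

/-- Singular values of a matrix: square roots of eigenvalues of `Aᴴ * A`. -/
noncomputable def singVals {n : ℕ} (A : Matrix (Fin n) (Fin n) ℂ) : Fin n → ℝ :=
  fun i => Real.sqrt ((Matrix.isHermitian_conjTranspose_mul_self A).eigenvalues i)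

/-- Trace (Schatten-1) norm. -/
noncomputable def traceNorm {n : ℕ} (A : Matrix (Fin n) (Fin n) ℂ) : ℝ :=
  ∑ i, singVals A i

/-- Schatten `p`-norm. -/
noncomputable def schattenNorm (p : ℝ) {n : ℕ} (A : Matrix (Fin n) (Fin n) ℂ) : ℝ :=
  (∑ i, singVals A i ^ p) ^ (1 / p)

/-- Rearrangement of a real tuple in non-increasing order. -/
noncomputable def descSort {n : ℕ} (v : Fin n → ℝ) : Fin n → ℝ :=
  fun i => (v ∘ Tuple.sort v) i.rev

/-- The function `p(A) = min_{i=1..n+1} ((i-1)/n + σ_i(A))`, `σ_{n+1} = 0`. -/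
noncomputable def pfun {n : ℕ} (A : Matrix (Fin n) (Fin n) ℂ) : ℝ :=
  ⨅ i : Fin (n + 1),
    ((i : ℝ) / n + if h : (i : ℕ) < n then descSort (singVals A) ⟨i, h⟩ else 0)

/-- Generalized optimal matching distance between two `n`-tuples. -/
noncomputable def gMatchDist {n : ℕ} (v w : Fin n → ℂ) : ℝ :=
  ⨅ σ : Equiv.Perm (Fin n), ⨅ i : Fin n,
    ((i : ℝ) / n + descSort (fun j => ‖v j - w (σ j)‖) i)

/-- A matrix-sequence. -/
abbrev MatSeq := (n : ℕ) → Matrix (Fin n) (Fin n) ℂ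

/-- `f : D → ℂ` is a spectral symbol (in the Weyl sense) of the matrix-sequence `A`. -/
def SymbolOf {q : ℕ} (A : MatSeq) (D : Set (Fin q → ℝ)) (f : (Fin q → ℝ) → ℂ) : Prop :=
  MeasurableSet D ∧ volume D ≠ 0 ∧ volume D ≠ ⊤ ∧
  ∀ F : ℂ → ℂ, Continuous F → HasCompactSupport F →
    Tendsto (fun n : ℕ => (n : ℂ)⁻¹ * ∑ i, F (eigs (A n) i)) atTop
      (nhds (((volume D).toReal)⁻¹ • ∫ x in D, F (f x)))

/-- Asymptotic optimal matching pseudodistance between matrix-sequences. -/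
noncomputable def dSeq (A B : MatSeq) : ℝ :=
  Filter.atTop.limsup fun n => matchDist (eigs (A n)) (eigs (B n))

/-- Asymptotic generalized optimal matching pseudodistance. -/
noncomputable def dSeq' (A B : MatSeq) : ℝ :=
  Filter.atTop.limsup fun n => gMatchDist (eigs (A n)) (eigs (B n))

/-- Hermitian (real) part of a matrix. -/
noncomputable def reM {n : ℕ} (M : Matrix (Fin n) (Fin n) ℂ) : Matrix (Fin n) (Fin n) ℂ :=
  (2 : ℂ)⁻¹ • (M + Mᴴ)

/-- Skew part of a matrix, `(M - Mᴴ)/(2i)`. -/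
noncomputable def imM {n : ℕ} (M : Matrix (Fin n) (Fin n) ℂ) : Matrix (Fin n) (Fin n) ℂ :=
  (2 * Complex.I)⁻¹ • (M - Mᴴ)

/-- The acs pseudodistance. -/
noncomputable def dacs (A B : MatSeq) : ℝ := Filter.atTop.limsup fun n => pfun (A n - B n)

/-- `p_N(A) = limsup ‖A_n‖₁ / n`. -/
noncomputable def pN (A : MatSeq) : ℝ := Filter.atTop.limsup fun n => traceNorm (A n) / n

/-- The pseudodistance `d_H`. -/
noncomputable def dH (A B : MatSeq) : ℝ :=
  dacs (fun n => reM (A n)) (fun n => reM (B n)) +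
    pN (fun n => imM (A n)) + pN (fun n => imM (B n))

/-!
The eigenvalues of a fixed matrix depend continuously on it in the optimal matching distance:
a limit point of the eigenvalue tuples of `A + N_k`, `N_k → 0`, has `∏ (z - w_i) = det (z - A)`,
so it is a rearrangement of the eigenvalues of `A`. Choosing `ε_n` so that this distance is at most
`1/(n+1)` makes the asymptotic matching distance between `{A_n}` and `{A_n + N_n}` vanish, and a
uniformly continuous test function `F` then changes the eigenvalue averages `n⁻¹ ∑ F(λ_i)` by `o(1)`.
-/

open Polynomial Topology

section Eigenvalues

variable {n : ℕ}

lemma ofFn_eigs (B : Matrix (Fin n) (Fin n) ℂ) :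
    (List.ofFn (eigs B) : Multiset ℂ) = B.charpoly.roots := by
  have hlen : B.charpoly.roots.toList.length = n := by
    rw [Multiset.length_toList, splits_iff_card_roots.mp (IsAlgClosed.splits _),
      Matrix.charpoly_natDegree_eq_dim, Fintype.card_fin]
  rw [← Multiset.coe_toList B.charpoly.roots]
  congr 1
  refine List.ext_getElem (by simp [hlen]) fun i h _ => ?_
  simp only [List.getElem_ofFn, eigs]
  rw [List.getD_eq_getElem _ _ (by omega)]

lemma charpoly_eq_prod_eigs (B : Matrix (Fin n) (Fin n) ℂ) :
    B.charpoly = ∏ i, (X - C (eigs B i)) := by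
  conv_lhs => rw [← prod_multiset_X_sub_C_of_monic_of_roots_card_eq B.charpoly_monic
    (splits_iff_card_roots.mp (IsAlgClosed.splits _)), ← ofFn_eigs]
  simp [List.map_ofFn, List.prod_ofFn, Function.comp_def]

lemma eigs_mem_spectrum (B : Matrix (Fin n) (Fin n) ℂ) (i : Fin n) :
    eigs B i ∈ spectrum ℂ B := by
  rw [Matrix.mem_spectrum_iff_isRoot_charpoly, ← mem_roots B.charpoly_monic.ne_zero,
    ← ofFn_eigs, Multiset.mem_coe]
  exact List.mem_ofFn.mpr ⟨i, rfl⟩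

lemma norm_eigs_le_specNorm (B : Matrix (Fin n) (Fin n) ℂ) (i : Fin n) :
    ‖eigs B i‖ ≤ specNorm B := by
  -- the operator norm on `Fin 0 → ℂ` is not a `NormOneClass`
  have : Nonempty (Fin n) := ⟨i⟩
  refine spectrum.norm_le_norm_of_mem ?_
  rw [AlgEquiv.spectrum_eq (Matrix.toEuclideanCLM (𝕜 := ℂ) (n := Fin n))]
  exact eigs_mem_spectrum B i

lemma specNorm_nonneg (B : Matrix (Fin n) (Fin n) ℂ) : 0 ≤ specNorm B :=
  norm_nonneg _

lemma specNorm_add_le (A B : Matrix (Fin n) (Fin n) ℂ) :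
    specNorm (A + B) ≤ specNorm A + specNorm B := by
  simpa only [specNorm, map_add] using norm_add_le _ _

lemma tendsto_zero_of_specNorm_tendsto_zero {ι : Type*} {l : Filter ι}
    {N : ι → Matrix (Fin n) (Fin n) ℂ} (h : Tendsto (fun k => specNorm (N k)) l (𝓝 0)) :
    Tendsto N l (𝓝 0) := by
  have hcont := LinearMap.continuous_of_finiteDimensional
    (Matrix.toEuclideanCLM (𝕜 := ℂ) (n := Fin n)).symm.toAlgEquiv.toLinearMap
  simpa [Function.comp_def] using
    (hcont.tendsto 0).comp (tendsto_zero_iff_norm_tendsto_zero.mpr h)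

end Eigenvalues

section Matching

variable {n : ℕ}

lemma List.count_ofFn {α : Type*} [DecidableEq α] (v : Fin n → α) (c : α) :
    (List.ofFn v).count c = Fintype.card {i // v i = c} := by
  rw [Fintype.card_subtype, ← Multiset.coe_count, ← Fin.univ_val_map, Multiset.count_map]
  simp [Finset.card_def, Finset.filter_val, eq_comm]

lemma exists_perm_comp_eq_of_perm_ofFn {α : Type*} {v w : Fin n → α}
    (h : (List.ofFn v).Perm (List.ofFn w)) : ∃ σ : Equiv.Perm (Fin n), ∀ i, w (σ i) = v i := by
  classical
  have hfib : ∀ c, Fintype.card {i // v i = c} = Fintype.card {i // w i = c} := by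
    intro c
    simpa only [List.count_ofFn] using h.count_eq c
  exact ⟨Equiv.ofFiberEquiv fun c => Fintype.equivOfCardEq (hfib c), Equiv.ofFiberEquiv_map _⟩

lemma matchDist_nonneg (v w : Fin n → ℂ) : 0 ≤ matchDist v w :=
  Real.iInf_nonneg fun _ => Real.iSup_nonneg fun _ => norm_nonneg _

lemma matchDist_le_of_forall_le {v w : Fin n → ℂ} {ε : ℝ} (hε : 0 ≤ ε) (σ : Equiv.Perm (Fin n))
    (h : ∀ i, ‖v i - w (σ i)‖ ≤ ε) : matchDist v w ≤ ε :=
  (ciInf_le ⟨0, by rintro _ ⟨τ, rfl⟩; exact Real.iSup_nonneg fun _ => norm_nonneg _⟩ σ).trans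
    (Real.iSup_le h hε)

lemma exists_forall_lt_of_matchDist_lt {v w : Fin n → ℂ} {δ : ℝ} (h : matchDist v w < δ) :
    ∃ σ : Equiv.Perm (Fin n), ∀ i, ‖v i - w (σ i)‖ < δ := by
  obtain ⟨σ, hσ⟩ := exists_lt_of_ciInf_lt h
  exact ⟨σ, fun i => (le_ciSup (Finite.bddAbove_range _) i).trans_lt hσ⟩

end Matching

section Continuity

variable {n : ℕ}

lemma ofFn_eq_roots_charpoly_of_tendsto {ι : Type*} {l : Filter ι} [l.NeBot]
    {M : ι → Matrix (Fin n) (Fin n) ℂ} {A : Matrix (Fin n) (Fin n) ℂ} {w : Fin n → ℂ}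
    (hM : Tendsto M l (𝓝 A)) (hw : Tendsto (fun k => eigs (M k)) l (𝓝 w)) :
    (List.ofFn w : Multiset ℂ) = A.charpoly.roots := by
  have hprod : ∏ i, (X - C (w i)) = A.charpoly := by
    refine Polynomial.funext fun z => ?_
    have h₁ : Tendsto (fun k => (M k).charpoly.eval z) l (𝓝 (∏ i, (z - w i))) := by
      simp only [charpoly_eq_prod_eigs, eval_prod, eval_sub, eval_X, eval_C]
      exact tendsto_finsetProd _ fun i _ =>
        tendsto_const_nhds.sub (((continuous_apply i).tendsto w).comp hw)
    have h₂ : Tendsto (fun k => (M k).charpoly.eval z) l (𝓝 (A.charpoly.eval z)) := by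
      simp only [Matrix.eval_charpoly]
      exact ((continuous_const.sub continuous_id).matrix_det.tendsto A).comp hM
    simpa [eval_prod] using tendsto_nhds_unique h₁ h₂
  rw [← hprod, ← Fin.univ_val_map, Finset.prod_eq_multiset_prod,
    ← roots_multiset_prod_X_sub_C (Finset.univ.val.map w), Multiset.map_map]
  rfl

lemma exists_matchDist_eigs_add_le (A : Matrix (Fin n) (Fin n) ℂ) {ε : ℝ} (hε : 0 < ε) :
    ∃ δ > 0, ∀ N : Matrix (Fin n) (Fin n) ℂ, specNorm N ≤ δ →
      matchDist (eigs (A + N)) (eigs A) ≤ ε := by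
  by_contra! hcon
  choose N hNle hNbad using fun k : ℕ => hcon (1 / (k + 1)) (by positivity)
  have hN : Tendsto N atTop (𝓝 0) := tendsto_zero_of_specNorm_tendsto_zero <|
    squeeze_zero (fun k => specNorm_nonneg _) hNle tendsto_one_div_add_atTop_nhds_zero_nat
  have hbdd : ∀ k, eigs (A + N k) ∈ Metric.closedBall 0 (specNorm A + 1) := by
    intro k
    have hNk : specNorm (N k) ≤ 1 := (hNle k).trans (by
      rw [div_le_one (by positivity)]; linarith [(k.cast_nonneg : (0 : ℝ) ≤ k)])
    rw [Metric.mem_closedBall, dist_zero_right,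
      pi_norm_le_iff_of_nonneg (by linarith [specNorm_nonneg A])]
    exact fun i => (norm_eigs_le_specNorm _ i).trans ((specNorm_add_le _ _).trans (by linarith))
  obtain ⟨w, -, φ, hφ, hw⟩ := (isCompact_closedBall _ _).tendsto_subseq hbdd
  have hAN : Tendsto (fun k => A + N (φ k)) atTop (𝓝 A) := by
    simpa using (hN.comp hφ.tendsto_atTop).const_add A
  obtain ⟨σ, hσ⟩ := exists_perm_comp_eq_of_perm_ofFn <| Multiset.coe_eq_coe.mp <|
    (ofFn_eq_roots_charpoly_of_tendsto hAN hw).trans (ofFn_eigs A).symm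
  obtain ⟨k, hk⟩ := (Metric.tendsto_nhds.mp hw ε hε).exists
  refine (hNbad (φ k)).not_ge (matchDist_le_of_forall_le hε.le σ fun i => ?_)
  rw [hσ, ← dist_eq_norm]
  exact (dist_le_pi_dist _ _ i).trans hk.le

end Continuity

lemma norm_sum_sub_sum_le_of_matchDist_lt {E : Type*} [SeminormedAddCommGroup E] {n : ℕ}
    {F : ℂ → E} {δ η : ℝ} (hF : ∀ ⦃x y : ℂ⦄, dist x y < δ → dist (F x) (F y) < η) {v w : Fin n → ℂ}
    (h : matchDist v w < δ) : ‖∑ i, F (v i) - ∑ i, F (w i)‖ ≤ n * η := by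
  obtain ⟨σ, hσ⟩ := exists_forall_lt_of_matchDist_lt h
  calc ‖∑ i, F (v i) - ∑ i, F (w i)‖ = ‖∑ i, (F (v i) - F (w (σ i)))‖ := by
        rw [Finset.sum_sub_distrib, Equiv.sum_comp σ (fun i => F (w i))]
    _ ≤ ∑ i, ‖F (v i) - F (w (σ i))‖ := norm_sum_le _ _
    _ ≤ ∑ _i : Fin n, η := Finset.sum_le_sum fun i _ => by
        rw [← dist_eq_norm]
        exact (hF (by rw [dist_eq_norm]; exact hσ i)).le
    _ = n * η := by simp

lemma tendsto_inv_mul_sum_sub_of_tendsto_matchDist {F : ℂ → ℂ} (hF : UniformContinuous F)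
    {v w : (n : ℕ) → Fin n → ℂ} (h : Tendsto (fun n => matchDist (v n) (w n)) atTop (𝓝 0)) :
    Tendsto (fun n : ℕ => (n : ℂ)⁻¹ * (∑ i, F (v n i) - ∑ i, F (w n i))) atTop (𝓝 0) := by
  rw [NormedAddGroup.tendsto_nhds_zero]
  intro η hη
  obtain ⟨δ, hδ, hFδ⟩ := Metric.uniformContinuous_iff.mp hF (η / 2) (half_pos hη)
  filter_upwards [h.eventually (gt_mem_nhds hδ), eventually_gt_atTop 0] with n hn hn0
  rw [norm_mul, norm_inv, Complex.norm_natCast]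
  calc (n : ℝ)⁻¹ * ‖∑ i, F (v n i) - ∑ i, F (w n i)‖ ≤ (n : ℝ)⁻¹ * (n * (η / 2)) := by
        gcongr
        exact norm_sum_sub_sum_le_of_matchDist_lt hFδ hn
    _ = η / 2 := by field_simp
    _ < η := half_lt_self hη

theorem SymbolOf.of_tendsto_matchDist {q : ℕ} {A B : MatSeq} {D : Set (Fin q → ℝ)}
    {f : (Fin q → ℝ) → ℂ} (hA : SymbolOf A D f)
    (hAB : Tendsto (fun n => matchDist (eigs (B n)) (eigs (A n))) atTop (𝓝 0)) :
    SymbolOf B D f := by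
  obtain ⟨hD, hD₀, hD_top, hlim⟩ := hA
  refine ⟨hD, hD₀, hD_top, fun F hF hF_supp => ?_⟩
  have hdiff := tendsto_inv_mul_sum_sub_of_tendsto_matchDist
    (hF.uniformContinuous_of_tendsto_cocompact hF_supp.is_zero_at_infty) hAB
  simpa [mul_sub] using hdiff.add (hlim F hF hF_supp)

/-- for every matrix-sequence with spectral symbol `f` there are positive
reals `ε_n` such that any perturbation with `‖N_n‖ ≤ ε_n` preserves the spectral symbol. -/
theorem stmt_12 {q : ℕ} (A : MatSeq) (D : Set (Fin q → ℝ)) (f : (Fin q → ℝ) → ℂ)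
    (hA : SymbolOf A D f) :
    ∃ ε : ℕ → ℝ, (∀ n, 0 < ε n) ∧
      ∀ N : MatSeq, (∀ n, specNorm (N n) ≤ ε n) →
        SymbolOf (fun n => A n + N n) D f := by
  choose ε hε hmatch using fun n : ℕ =>
    exists_matchDist_eigs_add_le (A n) (Nat.one_div_pos_of_nat (n := n))
  refine ⟨ε, hε, fun N hN => hA.of_tendsto_matchDist ?_⟩
  exact squeeze_zero (fun n => matchDist_nonneg _ _) (fun n => hmatch n (N n) (hN n))
    tendsto_one_div_add_atTop_nhds_zero_nat
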